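/- arXiv:2109.11282 — 5 statements merged into one kernel-verified Lean document; each statement's English description precedes it below -/
import Mathlib

section
/- Let Y*, M : Ω → {0,1} be random variables with M independent of Y*, ℙ(M = 1) = p ∈ (0,1], and Y := M·Y*. Fix ŷ and a loss f* : {0,1} × ℝ → ℝ, write ℓ₊ := f*(1, ŷ), ℓ₋ := f*(0, ŷ), and f := PS_p f*. Then (i) Var[f*(Y*, ŷ)] = Var[Y*]·(ℓ₊ − ℓ₋)², (ii) Var[f(Y, ŷ)] = Var[Y]·(ℓ₊ − ℓ₋)²/p², and (iii) if q* := 𝔼[Y*] ∈ (0,1), then Var[f(Y, ŷ)] = ((1 − p·q*)/(p·(1 − q*)))·Var[f*(Y*, ŷ)]; in particular the variance of the unbiased estimator grows like 1/p as p → 0. -/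
open MeasureTheory ProbabilityTheory

/-- Propensity-scoring operator for scalar losses on binary labels. -/
noncomputable def PS {𝒳 : Type*} (p : ℝ) (f : ℝ → 𝒳 → ℝ) : ℝ → 𝒳 → ℝ :=
  fun y z => y * ((f 1 z + (p - 1) * f 0 z) / p) + (1 - y) * f 0 z

/-! A function of a `{0,1}`-valued random variable `Z` is affine in `Z`,
`g Z = g 0 + (g 1 - g 0) * Z`, so its variance is `(g 1 - g 0)² Var[Z]`, and
`Var[Z] = 𝔼[Z] (1 - 𝔼[Z])`. The propensity-scored loss jumps by `(ℓ₊ - ℓ₋) / p` between the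
labels `0` and `1`, which gives (ii); by independence `𝔼[M Y*] = p q*`, and (iii) follows from
(i) and (ii). -/

lemma PS_one_sub_PS_zero {𝒳 : Type*} {p : ℝ} (hp : p ≠ 0) (f : ℝ → 𝒳 → ℝ) (z : 𝒳) :
    PS p f 1 z - PS p f 0 z = (f 1 z - f 0 z) / p := by
  simp only [PS]
  field_simp
  ring

lemma comp_eq_const_add_mul_of_zero_or_one {α : Type*} {Z : α → ℝ}
    (hZ : ∀ x, Z x = 0 ∨ Z x = 1) (g : ℝ → ℝ) :
    (fun x => g (Z x)) = fun x => g 0 + (g 1 - g 0) * Z x := by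
  ext x
  rcases hZ x with h | h <;> simp [h]

section ZeroOrOne

variable {Ω : Type*} [MeasurableSpace Ω] {μ : Measure Ω} {Z : Ω → ℝ}

lemma variance_comp_of_zero_or_one [IsProbabilityMeasure μ] (hZm : AEStronglyMeasurable Z μ)
    (hZ : ∀ ω, Z ω = 0 ∨ Z ω = 1) (g : ℝ → ℝ) :
    Var[fun ω => g (Z ω); μ] = Var[Z; μ] * (g 1 - g 0) ^ 2 := by
  rw [comp_eq_const_add_mul_of_zero_or_one hZ, variance_const_add (hZm.const_mul _),
    variance_const_mul, mul_comm]

lemma memLp_of_zero_or_one [IsFiniteMeasure μ] (hZm : AEStronglyMeasurable Z μ)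
    (hZ : ∀ ω, Z ω = 0 ∨ Z ω = 1) (q : ENNReal) : MemLp Z q μ := by
  refine (memLp_top_of_bound hZm 1 (ae_of_all _ fun ω => ?_)).mono_exponent le_top
  rcases hZ ω with h | h <;> simp [h]

lemma variance_of_zero_or_one [IsProbabilityMeasure μ] (hZm : AEStronglyMeasurable Z μ)
    (hZ : ∀ ω, Z ω = 0 ∨ Z ω = 1) :
    Var[Z; μ] = μ[Z] * (1 - μ[Z]) := by
  have hsq : Z ^ 2 = Z := by
    ext ω
    rcases hZ ω with h | h <;> simp [h]
  rw [variance_eq_sub (memLp_of_zero_or_one hZm hZ 2), hsq]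
  ring

lemma integral_eq_measureReal_of_zero_or_one (hZm : Measurable Z)
    (hZ : ∀ ω, Z ω = 0 ∨ Z ω = 1) :
    μ[Z] = μ.real {ω | Z ω = 1} := by
  have hind : Z = {ω | Z ω = 1}.indicator 1 := by
    ext ω
    rcases hZ ω with h | h <;> simp [h]
  nth_rewrite 1 [hind]
  exact integral_indicator_one (s := {ω | Z ω = 1}) (hZm (measurableSet_singleton 1))

end ZeroOrOne

/-- **Variance of the unbiased binary estimator.** Under the binary masking model
(`M` independent of `Y*`, `ℙ(M=1) = p ∈ (0,1]`, `Y := M·Y*`), for a fixed prediction `ŷ`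
and loss `f*` with `ℓ₊ := f*(1,ŷ)`, `ℓ₋ := f*(0,ŷ)` and `f := PS_p f*`:
(i) `Var[f*(Y*,ŷ)] = Var[Y*]·(ℓ₊ − ℓ₋)²`,
(ii) `Var[f(Y,ŷ)] = Var[Y]·(ℓ₊ − ℓ₋)²/p²`, and
(iii) if `q* := 𝔼[Y*] ∈ (0,1)` then
`Var[f(Y,ŷ)] = ((1 − p·q*)/(p·(1 − q*)))·Var[f*(Y*,ŷ)]`. -/
theorem variance_of_unbiased_estimator
    {Ω : Type*} [MeasurableSpace Ω] (P : Measure Ω) [IsProbabilityMeasure P]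
    (Ystar M : Ω → ℝ)
    (hYstar : Measurable Ystar) (hM : Measurable M)
    (hYstar01 : ∀ ω, Ystar ω = 0 ∨ Ystar ω = 1)
    (hM01 : ∀ ω, M ω = 0 ∨ M ω = 1)
    (p : ℝ) (hp : p ∈ Set.Ioc (0 : ℝ) 1)
    (hindep : IndepFun Ystar M P)
    (hMp : P {ω | M ω = 1} = ENNReal.ofReal p)
    (yhat : ℝ) (fstar : ℝ → ℝ → ℝ) :
    variance (fun ω => fstar (Ystar ω) yhat) P
        = variance Ystar P * (fstar 1 yhat - fstar 0 yhat) ^ 2 ∧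
    variance (fun ω => PS p fstar (M ω * Ystar ω) yhat) P
        = variance (fun ω => M ω * Ystar ω) P * (fstar 1 yhat - fstar 0 yhat) ^ 2 / p ^ 2 ∧
    ((∫ ω, Ystar ω ∂P) ∈ Set.Ioo (0 : ℝ) 1 →
      variance (fun ω => PS p fstar (M ω * Ystar ω) yhat) P
        = ((1 - p * ∫ ω, Ystar ω ∂P) / (p * (1 - ∫ ω, Ystar ω ∂P)))
            * variance (fun ω => fstar (Ystar ω) yhat) P) := by
  obtain ⟨hp0, -⟩ := hp
  have hY01 : ∀ ω, M ω * Ystar ω = 0 ∨ M ω * Ystar ω = 1 := fun ω => by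
    rcases hM01 ω with h | h <;> rcases hYstar01 ω with h' | h' <;> simp [h, h']
  have hYm : AEStronglyMeasurable (fun ω => M ω * Ystar ω) P :=
    (hM.mul hYstar).aestronglyMeasurable
  have hvar_fstar :=
    variance_comp_of_zero_or_one (μ := P) hYstar.aestronglyMeasurable hYstar01 (fstar · yhat)
  have hvar_PS : variance (fun ω => PS p fstar (M ω * Ystar ω) yhat) P
      = variance (fun ω => M ω * Ystar ω) P * (fstar 1 yhat - fstar 0 yhat) ^ 2 / p ^ 2 := by
    rw [variance_comp_of_zero_or_one hYm hY01 (PS p fstar · yhat), PS_one_sub_PS_zero hp0.ne',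
      div_pow, mul_div_assoc]
  refine ⟨hvar_fstar, hvar_PS, fun hq => ?_⟩
  have hEM : ∫ ω, M ω ∂P = p := by
    rw [integral_eq_measureReal_of_zero_or_one hM hM01, measureReal_def, hMp,
      ENNReal.toReal_ofReal hp0.le]
  have hEY : ∫ ω, M ω * Ystar ω ∂P = p * ∫ ω, Ystar ω ∂P := by
    rw [hindep.symm.integral_fun_mul_eq_mul_integral hM.aestronglyMeasurable
      hYstar.aestronglyMeasurable, hEM]
  rw [hvar_PS, hvar_fstar, variance_of_zero_or_one hYm hY01, hEY,
    variance_of_zero_or_one hYstar.aestronglyMeasurable hYstar01]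
  have hq1 : 1 - ∫ ω, Ystar ω ∂P ≠ 0 := by linarith [hq.2]
  field_simp
end

section
/- Let (E, d) be a metric space, p ∈ (0,1], ρ ≥ 0, and f : {0,1} × E → ℝ be such that for each y ∈ {0,1} the map x ↦ f(y,x) is ρ-Lipschitz. Then for each y ∈ {0,1} the map x ↦ (PS_p f)(y,x) is ((2−p)/p)·ρ-Lipschitz. -/
/-- **Lipschitz constant of the propensity-scored loss.** If for each `y ∈ {0,1}` the map
`x ↦ f(y,x)` is `ρ`-Lipschitz on the metric space `E`, then for each `y ∈ {0,1}` the map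
`x ↦ (PS_p f)(y,x)` is `((2−p)/p)·ρ`-Lipschitz. -/
theorem lipschitz_of_propensity_scored
    {E : Type*} [MetricSpace E]
    (p : ℝ) (hp : p ∈ Set.Ioc (0 : ℝ) 1)
    (ρ : ℝ) (hρ : 0 ≤ ρ)
    (f : ℝ → E → ℝ)
    (hf : ∀ y, (y = 0 ∨ y = 1) → ∀ x₁ x₂ : E, dist (f y x₁) (f y x₂) ≤ ρ * dist x₁ x₂) :
    ∀ y, (y = 0 ∨ y = 1) → ∀ x₁ x₂ : E,
      dist (PS p f y x₁) (PS p f y x₂) ≤ ((2 - p) / p) * ρ * dist x₁ x₂ := by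
  obtain ⟨hp0, hp1⟩ := hp
  rintro y (rfl | rfl) x₁ x₂
  · simp only [PS, zero_mul, zero_add, sub_zero, one_mul]
    have h0 := hf 0 (Or.inl rfl) x₁ x₂
    have hc : (1 : ℝ) ≤ (2 - p) / p := by
      rw [le_div_iff₀ hp0]; linarith
    calc dist (f 0 x₁) (f 0 x₂) ≤ ρ * dist x₁ x₂ := h0
      _ = 1 * (ρ * dist x₁ x₂) := by ring
      _ ≤ ((2 - p) / p) * (ρ * dist x₁ x₂) := by
          exact mul_le_mul_of_nonneg_right hc (by positivity)
      _ = ((2 - p) / p) * ρ * dist x₁ x₂ := by ring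
  · simp only [PS, one_mul, sub_self, zero_mul, add_zero]
    have h0 := hf 0 (Or.inl rfl) x₁ x₂
    have h1 := hf 1 (Or.inr rfl) x₁ x₂
    rw [Real.dist_eq] at *
    have key : (f 1 x₁ + (p - 1) * f 0 x₁) / p - (f 1 x₂ + (p - 1) * f 0 x₂) / p
        = (f 1 x₁ - f 1 x₂) / p + ((p - 1) / p) * (f 0 x₁ - f 0 x₂) := by
      field_simp; ring
    rw [key]
    calc |(f 1 x₁ - f 1 x₂) / p + ((p - 1) / p) * (f 0 x₁ - f 0 x₂)|
        ≤ |(f 1 x₁ - f 1 x₂) / p| + |((p - 1) / p) * (f 0 x₁ - f 0 x₂)| := abs_add_le _ _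
      _ = |f 1 x₁ - f 1 x₂| / p + ((1 - p) / p) * |f 0 x₁ - f 0 x₂| := by
          rw [abs_div, abs_mul, abs_div, abs_of_pos hp0, abs_of_nonpos (by linarith : p - 1 ≤ 0)]
          ring_nf
      _ ≤ (ρ * dist x₁ x₂) / p + ((1 - p) / p) * (ρ * dist x₁ x₂) := by
          gcongr <;> first
            | exact h0 | exact h1 | exact div_nonneg (by linarith) hp0.le
      _ = ((2 - p) / p) * ρ * dist x₁ x₂ := by field_simp; ring
end

section
/- Let p ∈ (0,1], a ≤ b real numbers, and f : {0,1} × 𝒳 → ℝ with a ≤ f(y,x) ≤ b for all y ∈ {0,1} and x ∈ 𝒳. Then for all y ∈ {0,1} and x ∈ 𝒳: (a + (p−1)·b)/p ≤ (PS_p f)(y,x) ≤ (b + (p−1)·a)/p. In particular the range of PS_p f has length at most ((2−p)/p)·(b−a). -/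
/-- **Range of the propensity-scored loss.** If `a ≤ f(y,x) ≤ b` for all `y ∈ {0,1}`, `x ∈ 𝒳`,
then `(a + (p−1)·b)/p ≤ (PS_p f)(y,x) ≤ (b + (p−1)·a)/p`; in particular the range of `PS_p f`
has length at most `((2−p)/p)·(b−a)`. -/
theorem range_of_propensity_scored
    {𝒳 : Type*} (p : ℝ) (hp : p ∈ Set.Ioc (0 : ℝ) 1)
    (a b : ℝ) (hab : a ≤ b)
    (f : ℝ → 𝒳 → ℝ)
    (hf : ∀ y, (y = 0 ∨ y = 1) → ∀ x : 𝒳, a ≤ f y x ∧ f y x ≤ b) :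
    (∀ y, (y = 0 ∨ y = 1) → ∀ x : 𝒳,
      (a + (p - 1) * b) / p ≤ PS p f y x ∧ PS p f y x ≤ (b + (p - 1) * a) / p) ∧
    (b + (p - 1) * a) / p - (a + (p - 1) * b) / p ≤ ((2 - p) / p) * (b - a) := by
  obtain ⟨hp0, hp1⟩ := hp
  constructor
  · rintro y (rfl | rfl) x
    · obtain ⟨h0a, h0b⟩ := hf 0 (Or.inl rfl) x
      simp only [PS]
      constructor
      · rw [div_le_iff₀ hp0]; nlinarith
      · rw [le_div_iff₀ hp0]; nlinarith
    · obtain ⟨h0a, h0b⟩ := hf 0 (Or.inl rfl) x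
      obtain ⟨h1a, h1b⟩ := hf 1 (Or.inr rfl) x
      simp only [PS]
      constructor
      · rw [div_le_iff₀ hp0]
        have : (f 1 x + (p - 1) * f 0 x) / p * p = f 1 x + (p - 1) * f 0 x :=
          div_mul_cancel₀ _ hp0.ne'
        nlinarith
      · rw [le_div_iff₀ hp0]
        have : (f 1 x + (p - 1) * f 0 x) / p * p = f 1 x + (p - 1) * f 0 x :=
          div_mul_cancel₀ _ hp0.ne'
        nlinarith
  · rw [div_sub_div_same, div_le_iff₀ hp0, div_mul_eq_mul_div,
      div_mul_cancel₀ _ hp0.ne']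
    nlinarith
end

section
/- Let (Ω, ℙ) be a probability space with the binary masking model: X : Ω → 𝒳, Y*, M : Ω → {0,1}, M independent of (X, Y*), ℙ(M = 1) = p ∈ (0,1], Y := M·Y*, and q := 𝔼[Y]. Let f : {0,1} × 𝒳 → ℝ be measurable with m := sup_{x ∈ 𝒳} |f(1,x) − f(0,x)| < ∞ and the relevant compositions integrable. Then 𝔼[ |(PS_p f)(Y, X) − f(Y, X)| ] ≤ q·((1 − p)/p)·m. -/
open MeasureTheory ProbabilityTheory

/-- **Expected deviation between the propensity-scored and the original loss.**
Under the binary masking model (`M` independent of `(X, Y*)`, `ℙ(M=1) = p ∈ (0,1]`,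
`Y := M·Y*`) with `q := 𝔼[Y]` and `m := sup_x |f(1,x) − f(0,x)| < ∞`, one has
`𝔼[|(PS_p f)(Y,X) − f(Y,X)|] ≤ q·((1−p)/p)·m`. -/
theorem expected_loss_difference
    {Ω : Type*} [MeasurableSpace Ω] (P : Measure Ω) [IsProbabilityMeasure P]
    {𝒳 : Type*} [MeasurableSpace 𝒳]
    (X : Ω → 𝒳) (Ystar M : Ω → ℝ)
    (hX : Measurable X) (hYstar : Measurable Ystar) (hM : Measurable M)
    (hYstar01 : ∀ ω, Ystar ω = 0 ∨ Ystar ω = 1)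
    (hM01 : ∀ ω, M ω = 0 ∨ M ω = 1)
    (p : ℝ) (hp : p ∈ Set.Ioc (0 : ℝ) 1)
    (hindep : IndepFun (fun ω => (X ω, Ystar ω)) M P)
    (hMp : P {ω | M ω = 1} = ENNReal.ofReal p)
    (f : ℝ → 𝒳 → ℝ) (hf : Measurable (Function.uncurry f))
    (hbdd : BddAbove (Set.range fun x : 𝒳 => |f 1 x - f 0 x|))
    (hint_ps : Integrable (fun ω => PS p f (M ω * Ystar ω) (X ω)) P)
    (hint_f : Integrable (fun ω => f (M ω * Ystar ω) (X ω)) P) :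
    ∫ ω, |PS p f (M ω * Ystar ω) (X ω) - f (M ω * Ystar ω) (X ω)| ∂P
      ≤ (∫ ω, M ω * Ystar ω ∂P) * ((1 - p) / p) * ⨆ x : 𝒳, |f 1 x - f 0 x| := by
  obtain ⟨hp0, hp1⟩ := hp
  set m : ℝ := ⨆ x : 𝒳, |f 1 x - f 0 x| with hm
  set c : ℝ := (1 - p) / p * m with hc
  have hc0 : 0 ≤ c := by
    have hm0 : 0 ≤ m := by
      have hΩ : Nonempty Ω := by
        by_contra h
        have h1 : P Set.univ = 1 := measure_univ
        rw [Set.univ_eq_empty_iff.mpr (not_nonempty_iff.1 h), measure_empty] at h1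
        simp at h1
      have hX0 : Nonempty 𝒳 := ⟨X (Classical.arbitrary Ω)⟩
      exact le_trans (abs_nonneg _) (le_ciSup hbdd (Classical.arbitrary 𝒳))
    exact mul_nonneg (div_nonneg (by linarith) hp0.le) hm0
  -- pointwise bound
  have hpt : ∀ ω, |PS p f (M ω * Ystar ω) (X ω) - f (M ω * Ystar ω) (X ω)|
      ≤ (M ω * Ystar ω) * c := by
    intro ω
    have hy : M ω * Ystar ω = 0 ∨ M ω * Ystar ω = 1 := by
      rcases hM01 ω with h | h <;> rcases hYstar01 ω with h' | h' <;> simp [h, h']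
    rcases hy with h | h
    · simp [PS, h]
    · rw [h]
      have hdiff : PS p f 1 (X ω) - f 1 (X ω) = (1 - p) / p * (f 1 (X ω) - f 0 (X ω)) := by
        simp only [PS]
        field_simp
        ring
      rw [hdiff, one_mul, abs_mul, abs_of_nonneg (div_nonneg (by linarith) hp0.le), hc]
      exact mul_le_mul_of_nonneg_left (le_ciSup hbdd (X ω))
        (div_nonneg (by linarith) hp0.le)
  have hintY : Integrable (fun ω => (M ω * Ystar ω) * c) P := by
    refine (Integrable.mono' (integrable_const (1 * c)) ?_ ?_)
    · exact (((hM.mul hYstar).mul_const c).aestronglyMeasurable)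
    · refine Filter.Eventually.of_forall fun ω => ?_
      have hy : M ω * Ystar ω = 0 ∨ M ω * Ystar ω = 1 := by
        rcases hM01 ω with h | h <;> rcases hYstar01 ω with h' | h' <;> simp [h, h']
      rcases hy with h | h <;> simp [h, abs_of_nonneg hc0, hc0]
  have hle := integral_mono ((hint_ps.sub hint_f).abs) hintY hpt
  calc ∫ ω, |PS p f (M ω * Ystar ω) (X ω) - f (M ω * Ystar ω) (X ω)| ∂P
      ≤ ∫ ω, (M ω * Ystar ω) * c ∂P := hle
    _ = (∫ ω, M ω * Ystar ω ∂P) * c := integral_mul_const c _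
    _ = (∫ ω, M ω * Ystar ω ∂P) * ((1 - p) / p) * m := by rw [hc]; ring
end

section
/- Let p ∈ (0,1] and let f* : {0,1} × ℝ → ℝ be such that for each y ∈ {0,1} the map ŷ ↦ f*(y, ŷ) is convex and f*(y, ŷ) ≥ f₀₁(y, ŷ) for all ŷ ∈ ℝ, where f₀₁ is the 0-1 loss. Define f(y, ŷ) := y·(2/p − 1)·f*(1, ŷ) + (1 − y)·f*(0, ŷ). Then for each y ∈ {0,1} the map ŷ ↦ f(y, ŷ) is convex, and f(y, ŷ) + y·(p − 1)/p ≥ (PS_p f₀₁)(y, ŷ) for all y ∈ {0,1}, ŷ ∈ ℝ; in particular f(y, ŷ) ≥ (PS_p f₀₁)(y, ŷ), i.e., f is a convex upper bound of the unbiased estimate of the 0-1 loss. -/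
/-- The 0-1 loss `f₀₁(y, ŷ) = y·𝟙[ŷ ≤ 0] + (1−y)·𝟙[ŷ > 0]`. -/
noncomputable def f01 : ℝ → ℝ → ℝ :=
  fun y yhat => y * (if yhat ≤ 0 then 1 else 0) + (1 - y) * (if 0 < yhat then 1 else 0)

/-- **Convex upper bound of the unbiased 0-1 loss.** Let `p ∈ (0,1]` and let `f*` be a
convex (in the second argument) upper bound of the 0-1 loss for `y ∈ {0,1}`. Then
`f(y, ŷ) := y·(2/p − 1)·f*(1, ŷ) + (1−y)·f*(0, ŷ)` is convex in `ŷ` for `y ∈ {0,1}`,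
satisfies `f(y, ŷ) + y·(p−1)/p ≥ (PS_p f₀₁)(y, ŷ)`, and in particular
`f(y, ŷ) ≥ (PS_p f₀₁)(y, ŷ)`. -/
theorem convex_upper_bound_01
    (p : ℝ) (hp : p ∈ Set.Ioc (0 : ℝ) 1)
    (fstar : ℝ → ℝ → ℝ)
    (hconv : ∀ y, (y = 0 ∨ y = 1) → ConvexOn ℝ Set.univ (fstar y))
    (hub : ∀ y, (y = 0 ∨ y = 1) → ∀ yhat : ℝ, f01 y yhat ≤ fstar y yhat) :
    (∀ y, (y = 0 ∨ y = 1) → ConvexOn ℝ Set.univ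
      (fun yhat => y * (2 / p - 1) * fstar 1 yhat + (1 - y) * fstar 0 yhat)) ∧
    (∀ y, (y = 0 ∨ y = 1) → ∀ yhat : ℝ,
      PS p f01 y yhat ≤ (y * (2 / p - 1) * fstar 1 yhat + (1 - y) * fstar 0 yhat)
        + y * (p - 1) / p) ∧
    (∀ y, (y = 0 ∨ y = 1) → ∀ yhat : ℝ,
      PS p f01 y yhat ≤ y * (2 / p - 1) * fstar 1 yhat + (1 - y) * fstar 0 yhat) := by

  obtain ⟨hp0, hp1⟩ := hp
  have hcoef : (0:ℝ) ≤ 2 / p - 1 := by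
    have : (1:ℝ) ≤ 2 / p := by
      rw [le_div_iff₀ hp0]; linarith
    linarith
  have key : ∀ y, (y = 0 ∨ y = 1) → ∀ yhat : ℝ,
      PS p f01 y yhat ≤ (y * (2 / p - 1) * fstar 1 yhat + (1 - y) * fstar 0 yhat)
        + y * (p - 1) / p := by
    rintro y (rfl | rfl) yhat
    · have := hub 0 (Or.inl rfl) yhat
      simp only [PS]
      ring_nf
      linarith
    · have h1 := hub 1 (Or.inr rfl) yhat
      have hp' : p ≠ 0 := hp0.ne'
      simp only [PS, f01] at h1 ⊢
      by_cases h : yhat ≤ 0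
      · simp only [if_pos h, if_neg (not_lt.mpr h)] at h1 ⊢
        have h1' : (1:ℝ) ≤ fstar 1 yhat := by linarith
        have h2 : 2 / p - 1 ≤ (2 / p - 1) * fstar 1 yhat :=
          le_mul_of_one_le_right hcoef h1'
        have h3 : (1:ℝ) / p = (2 / p - 1) + (p - 1) / p := by field_simp; norm_num
        ring_nf at h3 ⊢
        have h4 : 2 * p⁻¹ - 1 ≤ (2 / p - 1) * fstar 1 yhat := by
          have : 2 / p = 2 * p⁻¹ := by ring
          linarith [h2, this ▸ h2]
        have h5 : (2 / p - 1) * fstar 1 yhat = 2 * p⁻¹ * fstar 1 yhat - fstar 1 yhat := by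
          field_simp
        nlinarith [h3, h4, h5]
      · push_neg at h
        simp only [if_neg (not_le.mpr h), if_pos h] at h1 ⊢
        have h1' : (0:ℝ) ≤ fstar 1 yhat := by linarith
        have h2 : (0:ℝ) ≤ (2 / p - 1) * fstar 1 yhat := mul_nonneg hcoef h1'
        have h3 : (2 / p - 1) * fstar 1 yhat = 2 * p⁻¹ * fstar 1 yhat - fstar 1 yhat := by
          field_simp
        ring_nf
        nlinarith [h2, h3]
  refine ⟨?_, key, ?_⟩
  · rintro y (rfl | rfl)
    · simpa using (hconv 0 (Or.inl rfl))
    · have h := (hconv 1 (Or.inr rfl)).smul hcoef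
      simpa [smul_eq_mul, mul_comm] using h
  · rintro y hy yhat
    have h := key y hy yhat
    have hle : y * (p - 1) / p ≤ 0 := by
      rcases hy with rfl | rfl
      · simp
      · rw [one_mul]
        exact div_nonpos_of_nonpos_of_nonneg (by linarith) hp0.le
    linarith
end
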